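/- arXiv:0802.2171 — 2 statements merged into one kernel-verified Lean document; each statement's English description precedes it below -/
import Mathlib

section
/- For the zero-range partition function Z_{N,κ} = Σ_{η ∈ E_N} N^α / ∏_{x∈S} p(η(x)) with p(0)=1, p(n)=n^α (α > 1, κ ≥ 2), there exists a constant δ_κ > 0 such that δ_κ < Z_{N,κ} < δ_κ^{-1} for every N ≥ 1. -/
open Filter

attribute [local instance] Classical.propDecidable

noncomputable section

/-- `p(0) = 1`, `p(n) = n^α` for `n ≥ 1`. -/
def pZR (α : ℝ) (n : ℕ) : ℝ := if n = 0 then 1 else (n : ℝ) ^ α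

/-- The zero-range jump rate: `g(1) = 1` and `g(n) = (n/(n-1))^α` for `n ≥ 2`,
so that `g(1)⋯g(n) = n^α`. -/
def gZR (α : ℝ) (n : ℕ) : ℝ := if n ≤ 1 then 1 else (n : ℝ) ^ α / ((n - 1 : ℕ) : ℝ) ^ α

/-- The configuration space `E_N = {η : Fin κ → ℕ | Σ_x η(x) = N}` as a finset. -/
def confZR (κ N : ℕ) : Finset (Fin κ → ℕ) := Finset.Nat.antidiagonalTuple κ N

/-- The normalizing constant `Z_{N,κ}`. -/
def ZZR (α : ℝ) (κ N : ℕ) : ℝ :=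
  ∑ η ∈ confZR κ N, (N : ℝ) ^ α / ∏ x, pZR α (η x)

/-- The invariant measure `ν_N(η) = Z_{N,κ}⁻¹ N^α / ∏_x p(η(x))`. -/
def nuZR (α : ℝ) (κ N : ℕ) (η : Fin κ → ℕ) : ℝ :=
  (1 / ZZR α κ N) * ((N : ℝ) ^ α / ∏ x, pZR α (η x))

/-- `σ^{x,y}η`: move one particle from `x` to `y` (for `x ≠ y`). -/
def moveOne {κ : ℕ} (x y : Fin κ) (η : Fin κ → ℕ) : Fin κ → ℕ :=
  fun z => if z = x then η x - 1 else if z = y then η y + 1 else η z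

/-!
Put `g n = (p n)⁻¹`, so that `Z_{N,κ} = p(N) · W_κ(N)`, where `W_κ(N) = ∑_{η ∈ E_N} ∏_x g(η x)` is
the `κ`-fold convolution power of `g` evaluated at `N`. Putting all particles on one site gives
`Z_{N,κ} ≥ 1`. For the upper bound, `g` is summable since `α > 1`, and `g a ≤ 2^α g N` whenever
`2a ≥ N`. As one of `a, b` is at least `N / 2` when `a + b = N`, the convolution satisfies
`(g ∗ g)(N) ≤ D g(N)` with `D = 2^(α+1) ∑ g`, and induction on `κ` gives `W_κ(N) ≤ D^κ g(N)`,
that is `Z_{N,κ} ≤ D^κ`.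
-/

open Finset

theorem Finset.Nat.sum_antidiagonalTuple_succ {M : Type*} [AddCommMonoid M] (k n : ℕ)
    (f : (Fin (k + 1) → ℕ) → M) :
    ∑ η ∈ Nat.antidiagonalTuple (k + 1) n, f η =
      ∑ p ∈ antidiagonal n, ∑ η ∈ Nat.antidiagonalTuple k p.2, f (Fin.cons p.1 η) := by
  simp only [Finset.sum, Nat.antidiagonalTuple, Multiset.Nat.antidiagonalTuple,
    List.Nat.antidiagonalTuple, HasAntidiagonal.antidiagonal, Multiset.Nat.antidiagonal]
  simp [Function.comp_def, List.flatMap_def, List.sum_flatten]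

theorem sum_antidiagonal_mul_le_of_doubling {g : ℕ → ℝ} (hg : ∀ n, 0 ≤ g n) (hs : Summable g)
    {c : ℝ} (hc : ∀ a N, N ≤ 2 * a → g a ≤ c * g N) (N : ℕ) :
    ∑ p ∈ antidiagonal N, g p.1 * g p.2 ≤ 2 * c * (∑' n, g n) * g N := by
  have hcN : 0 ≤ c * g N := (hg N).trans (hc N N (by omega))
  have hpoint : ∀ p ∈ antidiagonal N, g p.1 * g p.2 ≤ c * g N * (g p.1 + g p.2) := by
    rintro ⟨a, b⟩ hab
    rw [HasAntidiagonal.mem_antidiagonal] at hab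
    rcases le_total b a with hba | hab'
    · nlinarith [hc a N (by omega), hg a, hg b]
    · nlinarith [hc b N (by omega), hg a, hg b]
  have hsum : ∑ p ∈ antidiagonal N, (g p.1 + g p.2) = 2 * ∑ n ∈ range (N + 1), g n := by
    rw [sum_add_distrib, ← Nat.sum_antidiagonal_swap (f := fun p => g p.2)]
    simp only [Prod.snd_swap]
    rw [← two_mul, Nat.sum_antidiagonal_eq_sum_range_succ (fun a _ => g a)]
  calc ∑ p ∈ antidiagonal N, g p.1 * g p.2
      ≤ ∑ p ∈ antidiagonal N, c * g N * (g p.1 + g p.2) := sum_le_sum hpoint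
    _ = c * g N * (2 * ∑ n ∈ range (N + 1), g n) := by rw [← mul_sum, hsum]
    _ ≤ c * g N * (2 * ∑' n, g n) := by
        gcongr
        exact hs.sum_le_tsum _ fun n _ => hg n
    _ = 2 * c * (∑' n, g n) * g N := by ring

theorem sum_antidiagonalTuple_prod_le {g : ℕ → ℝ} (hg : ∀ n, 0 ≤ g n) (hg0 : g 0 ≠ 0) {D : ℝ}
    (hD : ∀ N, ∑ p ∈ antidiagonal N, g p.1 * g p.2 ≤ D * g N) (κ N : ℕ) :
    ∑ η ∈ Nat.antidiagonalTuple κ N, ∏ x, g (η x) ≤ D ^ κ * (g 0)⁻¹ * g N := by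
  induction κ generalizing N with
  | zero =>
    cases N with
    | zero => simp [hg0]
    | succ N => simpa using mul_nonneg (inv_nonneg.mpr (hg 0)) (hg (N + 1))
  | succ k ih =>
    have hD0 : 0 ≤ D := by
      have h := hD 0
      simp only [Nat.antidiagonal_zero, sum_singleton] at h
      exact le_of_mul_le_mul_right (by nlinarith [hg 0]) ((hg 0).lt_of_ne' hg0)
    rw [Nat.sum_antidiagonalTuple_succ]
    simp only [Fin.prod_univ_succ, Fin.cons_zero, Fin.cons_succ, ← mul_sum]
    calc ∑ p ∈ antidiagonal N, g p.1 * ∑ η ∈ Nat.antidiagonalTuple k p.2, ∏ i, g (η i)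
        ≤ ∑ p ∈ antidiagonal N, g p.1 * (D ^ k * (g 0)⁻¹ * g p.2) :=
          sum_le_sum fun p _ => mul_le_mul_of_nonneg_left (ih p.2) (hg p.1)
      _ = D ^ k * (g 0)⁻¹ * ∑ p ∈ antidiagonal N, g p.1 * g p.2 := by
          rw [mul_sum]; exact sum_congr rfl fun p _ => by ring
      _ ≤ D ^ k * (g 0)⁻¹ * (D * g N) := by
          have := hg 0
          gcongr
          exact hD N
      _ = D ^ (k + 1) * (g 0)⁻¹ * g N := by ring

theorem pZR_pos (α : ℝ) (n : ℕ) : 0 < pZR α n := by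
  unfold pZR
  split_ifs with hn
  · exact one_pos
  · exact Real.rpow_pos_of_pos (Nat.cast_pos.mpr (Nat.pos_of_ne_zero hn)) α

theorem one_le_pZR {α : ℝ} (hα : 0 ≤ α) (n : ℕ) : 1 ≤ pZR α n := by
  unfold pZR
  split_ifs with hn
  · exact le_rfl
  · exact Real.one_le_rpow (by exact_mod_cast Nat.one_le_iff_ne_zero.mpr hn) hα

theorem pZR_le_two_rpow_mul {α : ℝ} (hα : 0 ≤ α) {a N : ℕ} (h : N ≤ 2 * a) :
    pZR α N ≤ 2 ^ α * pZR α a := by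
  rcases Nat.eq_zero_or_pos N with rfl | hN
  · simpa [pZR] using one_le_mul_of_one_le_of_one_le (Real.one_le_rpow one_le_two hα)
      (one_le_pZR hα a)
  · have ha : a ≠ 0 := by omega
    rw [pZR, pZR, if_neg hN.ne', if_neg ha, ← Real.mul_rpow zero_le_two (Nat.cast_nonneg a)]
    exact Real.rpow_le_rpow (Nat.cast_nonneg N) (by exact_mod_cast h) hα

theorem summable_inv_pZR {α : ℝ} (hα : 1 < α) : Summable fun n => (pZR α n)⁻¹ := by
  refine (summable_nat_add_iff 1).mp ?_
  simpa [pZR] using (summable_nat_add_iff 1).mpr (Real.summable_nat_rpow_inv.mpr hα)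

theorem ZZR_eq_pZR_mul (α : ℝ) (κ : ℕ) {N : ℕ} (hN : N ≠ 0) :
    ZZR α κ N = pZR α N * ∑ η ∈ confZR κ N, ∏ x, (pZR α (η x))⁻¹ := by
  simp only [ZZR, pZR, if_neg hN, mul_sum, div_eq_mul_inv, prod_inv_distrib]

theorem ZZR_le {α : ℝ} (hα : 1 < α) (κ : ℕ) {N : ℕ} (hN : N ≠ 0) :
    ZZR α κ N ≤ (2 * 2 ^ α * ∑' n, (pZR α n)⁻¹) ^ κ := by
  have hα0 : 0 ≤ α := by linarith
  have hp := pZR_pos α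
  have hdoubling : ∀ a N, N ≤ 2 * a → (pZR α a)⁻¹ ≤ 2 ^ α * (pZR α N)⁻¹ := by
    intro a N h
    rw [← div_eq_mul_inv, le_div_iff₀ (hp N), inv_mul_le_iff₀ (hp a), mul_comm]
    exact pZR_le_two_rpow_mul hα0 h
  have hconv := sum_antidiagonal_mul_le_of_doubling (fun n => (inv_pos.mpr (hp n)).le)
    (summable_inv_pZR hα) hdoubling
  have hW := sum_antidiagonalTuple_prod_le (fun n => (inv_pos.mpr (hp n)).le) (by simp [pZR])
    hconv κ N
  rw [inv_inv, show pZR α 0 = 1 by simp [pZR], mul_one] at hW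
  rw [ZZR_eq_pZR_mul α κ hN, confZR]
  calc pZR α N * ∑ η ∈ Nat.antidiagonalTuple κ N, ∏ x, (pZR α (η x))⁻¹
      ≤ pZR α N * ((2 * 2 ^ α * ∑' n, (pZR α n)⁻¹) ^ κ * (pZR α N)⁻¹) :=
        mul_le_mul_of_nonneg_left hW (hp N).le
    _ = (2 * 2 ^ α * ∑' n, (pZR α n)⁻¹) ^ κ := by
        field_simp [(hp N).ne']

theorem one_le_ZZR (α : ℝ) {κ N : ℕ} (hκ : 1 ≤ κ) (hN : N ≠ 0) : 1 ≤ ZZR α κ N := by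
  set η₀ : Fin κ → ℕ := Pi.single ⟨0, hκ⟩ N
  have hmem : η₀ ∈ confZR κ N := by simp [η₀, confZR, Nat.mem_antidiagonalTuple]
  have hterm : (N : ℝ) ^ α / ∏ x, pZR α (η₀ x) = 1 := by
    rw [prod_eq_single ⟨0, hκ⟩ (fun x _ hx => by simp [η₀, hx, pZR]) (by simp)]
    simp [η₀, pZR, hN, (Real.rpow_pos_of_pos (Nat.cast_pos.mpr (Nat.pos_of_ne_zero hN)) α).ne']
  have hnonneg : ∀ η ∈ confZR κ N, 0 ≤ (N : ℝ) ^ α / ∏ x, pZR α (η x) := fun η _ =>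
    div_nonneg (by positivity) (prod_nonneg fun x _ => (pZR_pos α _).le)
  exact hterm.symm.le.trans (single_le_sum hnonneg hmem)

/-- Uniform bounds on the zero-range partition function: there is `δ_κ > 0` with
`δ_κ < Z_{N,κ} < δ_κ⁻¹` for every `N ≥ 1`. -/
theorem stmt1 (α : ℝ) (hα : 1 < α) (κ : ℕ) (hκ : 2 ≤ κ) :
    ∃ δ : ℝ, 0 < δ ∧ ∀ N : ℕ, 1 ≤ N → δ < ZZR α κ N ∧ ZZR α κ N < δ⁻¹ := by
  set C := (2 * 2 ^ α * ∑' n, (pZR α n)⁻¹) ^ κ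
  have hC : 0 ≤ C := by
    have : 0 ≤ ∑' n, (pZR α n)⁻¹ := tsum_nonneg fun n => (inv_pos.mpr (pZR_pos α n)).le
    positivity
  refine ⟨(C + 2)⁻¹, by positivity, fun N hN => ⟨?_, ?_⟩⟩
  · calc (C + 2)⁻¹ < 1 := inv_lt_one_of_one_lt₀ (by linarith)
      _ ≤ ZZR α κ N := one_le_ZZR α (by omega) (by omega)
  · rw [inv_inv]
    linarith [ZZR_le hα κ (N := N) (by omega)]

end
end

section
/- For the condensed zero-range invariant measure ν_N on κ sites with α > 1: with 𝓔^x_N = {η : η(x) ≥ N − ℓ_N} for a sequence ℓ_N → ∞ with ℓ_N/N → 0, one has lim_{N→∞} ν_N(E_N ∖ ∪_{x∈S} 𝓔^x_N) = 0 and lim_{N→∞} ν_N(𝓔^x_N) = 1/κ for every x ∈ S. -/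
open Filter

attribute [local instance] Classical.propDecidable

noncomputable section

/-!
Write `f n = 1 / p(n)`, summable with sum `Γ` because `α > 1`, and let `Sₖ(j)` be the sum of
`∏ f(ξ i)` over `ξ ∈ ℕ^k` with `|ξ| = j`; then `∑ⱼ Sₖ(j) = Γ^k`. Fixing the occupation
`m = N - j` of site `x` leaves `k = κ - 1` free sites, so the unnormalised mass of the well at `x`
is `∑_{j ≤ ℓ_N} (N / (N - j))^α Sₖ(j)`: it lies between `∑_{j ≤ ℓ_N} Sₖ(j)` and
`(N / (N - ℓ_N))^α` times that sum, hence tends to `Γ^k`. Outside the wells some site still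
carries at least `N / κ` particles, so there `N^α f(η x) ≤ κ^α`, and the mass of `Δ_N` is at most
`κ^(α + 1)` times the tail `∑_{j > ℓ_N} Sₖ(j) → 0`. Once `2 ℓ_N < N` the wells are disjoint, so
`Z_N` is the sum of the well masses and the mass of `Δ_N`, and tends to `κ Γ^k`.
-/

open Finset

namespace ZeroRange

section Convolution

variable {R : Type*} [CommSemiring R] (f : ℕ → R)

def convPow (k m : ℕ) : R := ∑ η ∈ Nat.antidiagonalTuple k m, ∏ i, f (η i)

theorem sum_filter_antidiagonalTuple_coord_eq (k N : ℕ) (x : Fin (k + 1)) {m : ℕ}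
    (hm : m ≤ N) :
    ∑ η ∈ (Nat.antidiagonalTuple (k + 1) N).filter (fun η => η x = m), ∏ i, f (η i) =
      f m * convPow f k (N - m) := by
  rw [convPow, mul_sum]
  refine sum_nbij' (fun η i => η (x.succAbove i)) (fun ξ => x.insertNth m ξ) ?_ ?_ ?_ ?_ ?_
  · intro η hη
    simp only [mem_filter, Nat.mem_antidiagonalTuple] at hη ⊢
    rw [Fin.sum_univ_succAbove η x, hη.2] at hη
    omega
  · intro ξ hξ
    simp only [Nat.mem_antidiagonalTuple] at hξ
    simp only [mem_filter, Nat.mem_antidiagonalTuple, Fin.insertNth_apply_same, and_true]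
    rw [Fin.sum_univ_succAbove _ x]
    simp only [Fin.insertNth_apply_same, Fin.insertNth_apply_succAbove, hξ]
    omega
  · intro η hη
    simp only [mem_filter] at hη
    rw [← hη.2]
    exact Fin.insertNth_self_removeNth x η
  · intro ξ _
    simp
  · intro η hη
    simp only [mem_filter] at hη
    rw [Fin.prod_univ_succAbove _ x, hη.2]

theorem sum_filter_antidiagonalTuple_coord (k N : ℕ) (x : Fin (k + 1)) (P : ℕ → Prop)
    [DecidablePred P] :
    ∑ η ∈ (Nat.antidiagonalTuple (k + 1) N).filter (fun η => P (η x)), ∏ i, f (η i) =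
      ∑ m ∈ (range (N + 1)).filter P, f m * convPow f k (N - m) := by
  have hmaps : ∀ η ∈ (Nat.antidiagonalTuple (k + 1) N).filter (fun η => P (η x)),
      η x ∈ (range (N + 1)).filter P := by
    intro η hη
    simp only [mem_filter, Nat.mem_antidiagonalTuple, mem_range] at hη ⊢
    refine ⟨Nat.lt_succ_of_le ?_, hη.2⟩
    rw [← hη.1]
    exact single_le_sum (fun _ _ => Nat.zero_le _) (mem_univ x)
  rw [← sum_fiberwise_of_maps_to hmaps]
  refine sum_congr rfl fun m hm => ?_
  simp only [mem_filter, mem_range] at hm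
  rw [← sum_filter_antidiagonalTuple_coord_eq f k N x (Nat.le_of_lt_succ hm.1), filter_filter]
  refine sum_congr (filter_congr fun η _ => ?_) fun _ _ => rfl
  exact ⟨fun h => h.2, fun h => ⟨h ▸ hm.2, h⟩⟩

theorem convPow_succ (k N : ℕ) :
    convPow f (k + 1) N = ∑ m ∈ range (N + 1), f m * convPow f k (N - m) := by
  simpa [convPow] using sum_filter_antidiagonalTuple_coord f k N 0 (fun _ => True)

end Convolution

section RealConvolution

variable {f : ℕ → ℝ}

theorem convPow_nonneg (hf : ∀ n, 0 ≤ f n) (k m : ℕ) : 0 ≤ convPow f k m :=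
  sum_nonneg fun _ _ => prod_nonneg fun _ _ => hf _

theorem hasSum_convPow (hf : ∀ n, 0 ≤ f n) (hsum : Summable f) (k : ℕ) :
    HasSum (convPow f k) ((∑' n, f n) ^ k) := by
  induction k with
  | zero =>
    have : convPow f 0 = Pi.single 0 1 := by
      funext m
      cases m <;> simp [convPow, Nat.antidiagonalTuple_zero_zero, Nat.antidiagonalTuple_zero_succ]
    rw [this, pow_zero]
    exact hasSum_pi_single 0 1
  | succ k ih =>
    have hnorm : ∀ {g : ℕ → ℝ}, (∀ n, 0 ≤ g n) → Summable g → Summable fun n => ‖g n‖ :=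
      fun hg hs => hs.congr fun n => (Real.norm_of_nonneg (hg n)).symm
    have := hasSum_sum_range_mul_of_summable_norm (hnorm hf hsum)
      (hnorm (convPow_nonneg hf k) ih.summable)
    rw [ih.tsum_eq, ← pow_succ'] at this
    simpa only [← convPow_succ] using this

theorem sum_le_hasSum_sub_sum_range {a : ℝ} (hf : HasSum f a) (h0 : ∀ n, 0 ≤ f n)
    {s : Finset ℕ} {n : ℕ} (hs : ∀ j ∈ s, n ≤ j) :
    ∑ j ∈ s, f j ≤ a - ∑ j ∈ range n, f j := by
  have hdisj : Disjoint s (range n) :=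
    disjoint_left.2 fun j hj hj' => (mem_range.1 hj').not_ge (hs j hj)
  rw [le_sub_iff_add_le, ← sum_union hdisj]
  exact sum_le_hasSum _ (fun j _ => h0 j) hf

end RealConvolution

theorem exists_le_mul_of_sum_eq {k N : ℕ} {η : Fin (k + 1) → ℕ} (h : ∑ i, η i = N) :
    ∃ x, N ≤ (k + 1) * η x := by
  obtain ⟨x, -, hx⟩ := exists_le_of_sum_le (s := univ) (f := fun _ => N)
    (g := fun i => (k + 1) * η i) univ_nonempty (by simp [← mul_sum, h])
  exact ⟨x, hx⟩

variable {α : ℝ}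

section SiteWeight

def siteWeight (α : ℝ) (n : ℕ) : ℝ := (pZR α n)⁻¹

theorem siteWeight_of_ne_zero {n : ℕ} (hn : n ≠ 0) : siteWeight α n = ((n : ℝ) ^ α)⁻¹ := by
  simp [siteWeight, pZR, hn]

theorem siteWeight_nonneg (n : ℕ) : 0 ≤ siteWeight α n := by
  unfold siteWeight pZR
  split_ifs <;> positivity

theorem summable_siteWeight (hα : 1 < α) : Summable (siteWeight α) := by
  refine (Real.summable_nat_rpow_inv.2 hα).congr_cofinite ?_
  filter_upwards [eventually_cofinite_ne 0] with n hn
  rw [siteWeight_of_ne_zero hn]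

theorem tsum_siteWeight_pos (hα : 1 < α) : 0 < ∑' n, siteWeight α n :=
  (summable_siteWeight hα).tsum_pos siteWeight_nonneg 0 (by simp [siteWeight, pZR])

theorem rpow_mul_siteWeight (N : ℕ) {m : ℕ} (hm : m ≠ 0) :
    (N : ℝ) ^ α * siteWeight α m = ((N : ℝ) / m) ^ α := by
  rw [siteWeight_of_ne_zero hm, Real.div_rpow (by positivity) (by positivity), div_eq_mul_inv]

theorem tendsto_sum_range_convPow_siteWeight (hα : 1 < α) {ℓ : ℕ → ℕ}
    (hℓ : Tendsto ℓ atTop atTop) (k : ℕ) :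
    Tendsto (fun N => ∑ j ∈ range (ℓ N + 1), convPow (siteWeight α) k j) atTop
      (nhds ((∑' n, siteWeight α n) ^ k)) :=
  (hasSum_convPow siteWeight_nonneg (summable_siteWeight hα) k).tendsto_sum_nat.comp
    ((tendsto_add_atTop_nat 1).comp hℓ)

end SiteWeight

section Weight

def weight (α : ℝ) (N : ℕ) {κ : ℕ} (η : Fin κ → ℕ) : ℝ := (N : ℝ) ^ α / ∏ x, pZR α (η x)

def well (κ N L : ℕ) (x : Fin κ) : Finset (Fin κ → ℕ) :=
  (confZR κ N).filter (fun η => N - L ≤ η x)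

def delta (κ N L : ℕ) : Finset (Fin κ → ℕ) :=
  (confZR κ N).filter (fun η => ∀ x, η x < N - L)

theorem weight_eq_mul_prod (N : ℕ) {κ : ℕ} (η : Fin κ → ℕ) :
    weight α N η = (N : ℝ) ^ α * ∏ x, siteWeight α (η x) := by
  rw [weight, div_eq_mul_inv, ← prod_inv_distrib]
  rfl

theorem weight_nonneg (N : ℕ) {κ : ℕ} (η : Fin κ → ℕ) : 0 ≤ weight α N η := by
  rw [weight_eq_mul_prod]
  exact mul_nonneg (by positivity) (prod_nonneg fun _ _ => siteWeight_nonneg _)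

theorem sum_nuZR (κ N : ℕ) (s : Finset (Fin κ → ℕ)) :
    ∑ η ∈ s, nuZR α κ N η = (∑ η ∈ s, weight α N η) / ZZR α κ N := by
  rw [sum_div]
  exact sum_congr rfl fun η _ => by rw [nuZR, weight, one_div, inv_mul_eq_div]

theorem sum_weight_filter_coord (k N : ℕ) (x : Fin (k + 1)) (P : ℕ → Prop) [DecidablePred P] :
    ∑ η ∈ (confZR (k + 1) N).filter (fun η => P (η x)), weight α N η =
      ∑ m ∈ (range (N + 1)).filter P,
        (N : ℝ) ^ α * siteWeight α m * convPow (siteWeight α) k (N - m) := by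
  simp only [weight_eq_mul_prod, ← mul_sum, confZR, sum_filter_antidiagonalTuple_coord, mul_assoc]

theorem ZZR_eq_sum_weight_well_add {k N L : ℕ} (hLN : 2 * L < N) :
    ZZR α (k + 1) N =
      ∑ x, ∑ η ∈ well (k + 1) N L x, weight α N η + ∑ η ∈ delta (k + 1) N L, weight α N η := by
  have hunion : (confZR (k + 1) N).filter (fun η => ¬ ∀ x, η x < N - L) =
      univ.biUnion (well (k + 1) N L) := by
    ext η
    simp [well]
  have hdisj : ((univ : Finset (Fin (k + 1))) : Set (Fin (k + 1))).PairwiseDisjoint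
      (well (k + 1) N L) := by
    intro x _ y _ hxy
    refine disjoint_left.2 fun η hx hy => ?_
    simp only [well, mem_filter, confZR, Nat.mem_antidiagonalTuple] at hx hy
    have : η x + η y ≤ N := by
      rw [← hx.1, ← sum_pair hxy]
      exact sum_le_sum_of_subset (subset_univ _)
    omega
  rw [← sum_biUnion hdisj, ← hunion, ZZR, delta, sum_filter_not_add_sum_filter]
  rfl

end Weight

section Well

theorem sum_weight_well_eq {k N L : ℕ} (hLN : L < N) (x : Fin (k + 1)) :
    ∑ η ∈ well (k + 1) N L x, weight α N η =
      ∑ j ∈ range (L + 1), ((N : ℝ) / (N - j : ℕ)) ^ α * convPow (siteWeight α) k j := by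
  rw [well, sum_weight_filter_coord]
  refine sum_nbij' (N - ·) (N - ·) ?_ ?_ ?_ ?_ ?_ <;>
    simp only [mem_filter, mem_range]
  · intro m hm; omega
  · intro j hj; omega
  · intro m hm; omega
  · intro j hj; omega
  · intro m hm
    rw [rpow_mul_siteWeight N (by omega), Nat.sub_sub_self (by omega)]

theorem sum_range_convPow_le_sum_weight_well (hα : 0 ≤ α) {k N L : ℕ} (hLN : L < N)
    (x : Fin (k + 1)) :
    ∑ j ∈ range (L + 1), convPow (siteWeight α) k j ≤ ∑ η ∈ well (k + 1) N L x, weight α N η := by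
  rw [sum_weight_well_eq hLN]
  refine sum_le_sum fun j hj => le_mul_of_one_le_left (convPow_nonneg siteWeight_nonneg k j) ?_
  simp only [mem_range] at hj
  refine Real.one_le_rpow ?_ hα
  rw [one_le_div (by exact_mod_cast (by omega : 0 < N - j))]
  exact_mod_cast Nat.sub_le N j

theorem sum_weight_well_le (hα : 0 ≤ α) {k N L : ℕ} (hLN : L < N) (x : Fin (k + 1)) :
    ∑ η ∈ well (k + 1) N L x, weight α N η ≤
      ((N : ℝ) / (N - L : ℕ)) ^ α * ∑ j ∈ range (L + 1), convPow (siteWeight α) k j := by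
  rw [sum_weight_well_eq hLN, mul_sum]
  refine sum_le_sum fun j hj =>
    mul_le_mul_of_nonneg_right ?_ (convPow_nonneg siteWeight_nonneg k j)
  simp only [mem_range] at hj
  gcongr
  · exact_mod_cast (by omega : 0 < N - L)
  · omega

theorem tendsto_div_sub_rpow {ℓ : ℕ → ℕ}
    (hℓN : Tendsto (fun N => (ℓ N : ℝ) / (N : ℝ)) atTop (nhds 0)) :
    Tendsto (fun N : ℕ => ((N : ℝ) / (N - ℓ N : ℕ)) ^ α) atTop (nhds 1) := by
  have hsub : Tendsto (fun N : ℕ => ((N - ℓ N : ℕ) : ℝ) / N) atTop (nhds 1) := by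
    have h : Tendsto (fun N => 1 - (ℓ N : ℝ) / N) atTop (nhds 1) := by
      simpa using hℓN.const_sub 1
    refine h.congr' ?_
    filter_upwards [eventually_gt_atTop 0,
      hℓN.eventually (gt_mem_nhds zero_lt_one)] with N hN h
    rw [div_lt_one (Nat.cast_pos.2 hN)] at h
    rw [Nat.cast_sub (by exact_mod_cast h.le), sub_div, div_self (Nat.cast_ne_zero.2 hN.ne')]
  simpa [inv_div] using (hsub.inv₀ one_ne_zero).rpow_const (p := α) (Or.inl (by norm_num))

theorem eventually_two_mul_lt {ℓ : ℕ → ℕ}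
    (hℓN : Tendsto (fun N => (ℓ N : ℝ) / (N : ℝ)) atTop (nhds 0)) :
    ∀ᶠ N in atTop, 2 * ℓ N < N := by
  filter_upwards [hℓN.eventually (gt_mem_nhds (by norm_num : (0 : ℝ) < 1 / 2)),
    eventually_gt_atTop 0] with N h hN
  rw [div_lt_iff₀ (Nat.cast_pos.2 hN)] at h
  exact_mod_cast (by linarith : (2 * ℓ N : ℝ) < N)

theorem tendsto_sum_weight_well (hα : 1 < α) {ℓ : ℕ → ℕ} (hℓ : Tendsto ℓ atTop atTop)
    (hℓN : Tendsto (fun N => (ℓ N : ℝ) / (N : ℝ)) atTop (nhds 0)) {k : ℕ} (x : Fin (k + 1)) :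
    Tendsto (fun N => ∑ η ∈ well (k + 1) N (ℓ N) x, weight α N η) atTop
      (nhds ((∑' n, siteWeight α n) ^ k)) := by
  have hT := tendsto_sum_range_convPow_siteWeight hα hℓ k
  have hup := (tendsto_div_sub_rpow (α := α) hℓN).mul hT
  rw [one_mul] at hup
  refine tendsto_of_tendsto_of_tendsto_of_le_of_le' hT hup ?_ ?_
  all_goals filter_upwards [eventually_two_mul_lt hℓN] with N hN
  · exact sum_range_convPow_le_sum_weight_well (by linarith) (by omega) x
  · exact sum_weight_well_le (by linarith) (by omega) x

end Well

section Delta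

theorem sum_weight_heavy_le (hα : 1 < α) (k N L : ℕ) (x : Fin (k + 1)) :
    ∑ η ∈ (confZR (k + 1) N).filter (fun η => N ≤ (k + 1) * η x ∧ η x < N - L), weight α N η ≤
      ((k + 1 : ℕ) : ℝ) ^ α * ((∑' n, siteWeight α n) ^ k -
        ∑ j ∈ range (L + 1), convPow (siteWeight α) k j) := by
  set M := (range (N + 1)).filter fun m => N ≤ (k + 1) * m ∧ m < N - L
  have hS := convPow_nonneg (siteWeight_nonneg (α := α)) k
  have hinj : Set.InjOn (N - ·) M := fun m hm m' hm' h => by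
    simp only [M, coe_filter, mem_range, Set.mem_ofPred_eq] at hm hm' h
    omega
  calc _ = ∑ m ∈ M, (N : ℝ) ^ α * siteWeight α m * convPow (siteWeight α) k (N - m) :=
        sum_weight_filter_coord k N x fun m => N ≤ (k + 1) * m ∧ m < N - L
    _ ≤ ∑ m ∈ M, ((k + 1 : ℕ) : ℝ) ^ α * convPow (siteWeight α) k (N - m) := by
        refine sum_le_sum fun m hm => mul_le_mul_of_nonneg_right ?_ (hS _)
        simp only [M, mem_filter, mem_range] at hm
        have hm0 : m ≠ 0 := by rintro rfl; omega
        rw [rpow_mul_siteWeight N hm0]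
        gcongr
        rw [div_le_iff₀ (by positivity)]
        exact_mod_cast hm.2.1
    _ = ((k + 1 : ℕ) : ℝ) ^ α * ∑ j ∈ M.image (N - ·), convPow (siteWeight α) k j := by
        rw [mul_sum, sum_image hinj]
    _ ≤ _ := by
        gcongr
        refine sum_le_hasSum_sub_sum_range
          (hasSum_convPow siteWeight_nonneg (summable_siteWeight hα) k) hS fun j hj => ?_
        simp only [M, mem_image, mem_filter, mem_range] at hj
        omega

theorem sum_weight_delta_le_sum_heavy (k N L : ℕ) :
    ∑ η ∈ delta (k + 1) N L, weight α N η ≤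
      ∑ x, ∑ η ∈ (confZR (k + 1) N).filter (fun η => N ≤ (k + 1) * η x ∧ η x < N - L),
        weight α N η := by
  simp only [delta, sum_filter]
  rw [sum_comm]
  refine sum_le_sum fun η hη => ?_
  split_ifs with hΔ
  · obtain ⟨x, hx⟩ := exists_le_mul_of_sum_eq (Nat.mem_antidiagonalTuple.1 hη)
    refine le_trans ?_ (single_le_sum (fun y _ => ?_) (mem_univ x))
    · simp [hx, hΔ x]
    · split_ifs <;> simp [weight_nonneg]
  · exact sum_nonneg fun x _ => by split_ifs <;> simp [weight_nonneg]

theorem tendsto_sum_weight_delta (hα : 1 < α) {ℓ : ℕ → ℕ} (hℓ : Tendsto ℓ atTop atTop)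
    (k : ℕ) :
    Tendsto (fun N => ∑ η ∈ delta (k + 1) N (ℓ N), weight α N η) atTop (nhds 0) := by
  have hT := tendsto_sum_range_convPow_siteWeight hα hℓ k
  have hbound := ((hT.const_sub ((∑' n, siteWeight α n) ^ k)).const_mul
    (((k + 1 : ℕ) : ℝ) ^ α)).const_mul ((k + 1 : ℕ) : ℝ)
  rw [sub_self, mul_zero, mul_zero] at hbound
  refine squeeze_zero (fun N => sum_nonneg fun η _ => weight_nonneg N η) (fun N => ?_) hbound
  refine (sum_weight_delta_le_sum_heavy k N (ℓ N)).trans ?_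
  exact (sum_le_sum fun x _ => sum_weight_heavy_le hα k N (ℓ N) x).trans_eq (by simp)

end Delta

end ZeroRange

theorem stmt15_general (α : ℝ) (hα : 1 < α) (κ : ℕ)
    (ℓ : ℕ → ℕ) (hℓ : Tendsto ℓ atTop atTop)
    (hℓN : Tendsto (fun N => (ℓ N : ℝ) / (N : ℝ)) atTop (nhds 0)) :
    Tendsto (fun N => ∑ η ∈ (confZR κ N).filter
        (fun η => ∀ x, η x < N - ℓ N), nuZR α κ N η) atTop (nhds 0)
    ∧ ∀ x : Fin κ,
        Tendsto (fun N => ∑ η ∈ (confZR κ N).filter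
          (fun η => N - ℓ N ≤ η x), nuZR α κ N η) atTop (nhds (1 / κ)) := by
  open ZeroRange in
  rcases κ with _ | k
  · refine ⟨tendsto_const_nhds.congr' ?_, fun x => x.elim0⟩
    filter_upwards [eventually_ne_atTop 0] with N hN
    obtain ⟨n, rfl⟩ := Nat.exists_eq_succ_of_ne_zero hN
    simp [confZR, Nat.antidiagonalTuple_zero_succ]
  have hW := fun x : Fin (k + 1) => tendsto_sum_weight_well hα hℓ hℓN x
  have hΔ := tendsto_sum_weight_delta (α := α) hα hℓ k
  have hΓ := tsum_siteWeight_pos hα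
  set Γ := ∑' n, siteWeight α n
  have hZ : Tendsto (ZZR α (k + 1)) atTop (nhds ((k + 1 : ℕ) * Γ ^ k)) := by
    have hsum := (tendsto_finsetSum univ fun x _ => hW x).add hΔ
    rw [sum_const, card_univ, Fintype.card_fin, nsmul_eq_mul, add_zero] at hsum
    refine hsum.congr' ?_
    filter_upwards [eventually_two_mul_lt hℓN] with N hN
    exact (ZZR_eq_sum_weight_well_add hN).symm
  have hZ0 : ((k + 1 : ℕ) : ℝ) * Γ ^ k ≠ 0 := by positivity
  have hlim : Γ ^ k / ((k + 1 : ℕ) * Γ ^ k) = 1 / ((k + 1 : ℕ) : ℝ) := by field_simp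
  simp only [sum_nuZR]
  exact ⟨by simpa only [zero_div, Pi.div_def, delta] using hΔ.div hZ hZ0,
    fun x => by simpa only [hlim, Pi.div_def, well] using (hW x).div hZ hZ0⟩

/-- Concentration of `ν_N` on the wells `𝓔^x_N = {η : η(x) ≥ N − ℓ_N}`:
`ν_N(Δ_N) → 0` and `ν_N(𝓔^x_N) → 1/κ` for every `x`. -/
theorem stmt15 (α : ℝ) (hα : 1 < α) (κ : ℕ) (hκ : 2 ≤ κ)
    (ℓ : ℕ → ℕ) (hℓ : Tendsto ℓ atTop atTop)
    (hℓN : Tendsto (fun N => (ℓ N : ℝ) / (N : ℝ)) atTop (nhds 0)) :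
    Tendsto (fun N => ∑ η ∈ (confZR κ N).filter
        (fun η => ∀ x, η x < N - ℓ N), nuZR α κ N η) atTop (nhds 0)
    ∧ ∀ x : Fin κ,
        Tendsto (fun N => ∑ η ∈ (confZR κ N).filter
          (fun η => N - ℓ N ≤ η x), nuZR α κ N η) atTop (nhds (1 / κ)) :=
  stmt15_general α hα κ ℓ hℓ hℓN
end
end
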